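/- Fix p ∈ (0,1). For any Boolean function f : {-1,1}^n → {-1,1}, ‖f - E f‖_1 = Var(f) ≤ 2 max{p, 1-p} √π · E|∇f|. -/

import Mathlib

open Finset Real
open scoped Classical

noncomputable def wt (p : ℝ) (n : ℕ) (x : Fin n → Bool) : ℝ :=
  ∏ i, if x i then p else 1 - p

noncomputable def ex (p : ℝ) (n : ℕ) (f : (Fin n → Bool) → ℝ) : ℝ :=
  ∑ x : Fin n → Bool, wt p n x * f x

noncomputable def var (p : ℝ) (n : ℕ) (f : (Fin n → Bool) → ℝ) : ℝ :=
  ex p n (fun x => f x ^ 2) - (ex p n f) ^ 2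

def flipC {n : ℕ} (j : Fin n) (x : Fin n → Bool) : Fin n → Bool :=
  Function.update x j (!(x j))

noncomputable def Dj {n : ℕ} (j : Fin n) (f : (Fin n → Bool) → ℝ) (x : Fin n → Bool) : ℝ :=
  (f x - f (flipC j x)) / 2

noncomputable def gradNorm {n : ℕ} (f : (Fin n → Bool) → ℝ) (x : Fin n → Bool) : ℝ :=
  Real.sqrt (∑ j, (Dj j f x) ^ 2)

noncomputable def condExpJ (p : ℝ) {n : ℕ} (j : Fin n) (f : (Fin n → Bool) → ℝ)
    (x : Fin n → Bool) : ℝ :=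
  p * f (Function.update x j true) + (1 - p) * f (Function.update x j false)

noncomputable def infl (p : ℝ) (n : ℕ) (j : Fin n) (f : (Fin n → Bool) → ℝ) : ℝ :=
  ex p n (fun x => |f x - condExpJ p j f x|)

noncomputable def heatPt (p t : ℝ) (n : ℕ) (f : (Fin n → Bool) → ℝ)
    (x : Fin n → Bool) : ℝ :=
  ∑ y : Fin n → Bool,
    (∏ j, ((if y j = x j then Real.exp (-t) else 0)
      + (1 - Real.exp (-t)) * (if y j then p else 1 - p))) * f y

noncomputable def lpNorm (p : ℝ) (n : ℕ) (r : ℝ) (f : (Fin n → Bool) → ℝ) : ℝ :=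
  (ex p n (fun x => |f x| ^ r)) ^ (1 / r)

noncomputable def sens {n : ℕ} (f : (Fin n → Bool) → ℝ) (x : Fin n → Bool) : ℝ :=
  ((Finset.univ.filter (fun j : Fin n => f x ≠ f (flipC j x))).card : ℝ)

noncomputable def hEdge {n : ℕ} (f : (Fin n → Bool) → ℝ) (x : Fin n → Bool) : ℝ :=
  if f x = 1 then ((Finset.univ.filter (fun j : Fin n => f (flipC j x) ≠ 1)).card : ℝ) else 0


/-!
For `{±1}`-valued `f` with mean `μ` one has `|f - μ| = 1 - μ f`,
so `E|f - μ| = 1 - μ² = Var f`.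

For the inequality we prove Bobkov's functional inequality
`J(E g) ≤ E √(J(g)² + |∇g|²)` for `g` with values in `[0, 1]` and `J(t) = c t (1 - t)`,
by induction on the dimension. The one-coordinate step is the two-point inequality
`J(p a + q b)² ≤ (p J(a) + q J(b))² + ((a - b) / 2)²`, valid as soon as `c² p q ≤ 1 / 3`,
and Minkowski's inequality lets the coordinates be added one at a time. Applied to
`g = (1 + f) / 2`, for which `J(g) = 0` and `|∇g| = |∇f| / 2`, with
`c = (max(p, 1 - p) √π)⁻¹` (so that `c² p q ≤ 1 / π < 1 / 3`) it gives the claim.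
-/

section Expectation

variable {p : ℝ} {n : ℕ}

lemma wt_nonneg (hp0 : 0 ≤ p) (hp1 : p ≤ 1) (x : Fin n → Bool) : 0 ≤ wt p n x :=
  Finset.prod_nonneg fun i _ => by split <;> linarith

lemma sum_wt (p : ℝ) (n : ℕ) : ∑ x : Fin n → Bool, wt p n x = 1 := by
  have h := Finset.prod_univ_sum (fun _ : Fin n => (Finset.univ : Finset Bool))
    (fun _ b => if b = true then p else 1 - p)
  rw [Fintype.piFinset_univ] at h
  simp [wt, ← h]

lemma ex_affine (α β : ℝ) (f : (Fin n → Bool) → ℝ) :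
    ex p n (fun x => α * f x + β) = α * ex p n f + β := by
  simp only [ex, mul_add, Finset.sum_add_distrib, mul_left_comm _ α, ← Finset.mul_sum,
    ← Finset.sum_mul, sum_wt, one_mul]

lemma ex_const (β : ℝ) : ex p n (fun _ => β) = β := by
  simpa using ex_affine (p := p) 0 β (fun _ : Fin n → Bool => 0)

lemma ex_mono (hp0 : 0 ≤ p) (hp1 : p ≤ 1) {f g : (Fin n → Bool) → ℝ} (h : ∀ x, f x ≤ g x) :
    ex p n f ≤ ex p n g :=
  Finset.sum_le_sum fun x _ => mul_le_mul_of_nonneg_left (h x) (wt_nonneg hp0 hp1 x)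

lemma abs_ex_le (hp0 : 0 ≤ p) (hp1 : p ≤ 1) (f : (Fin n → Bool) → ℝ) :
    |ex p n f| ≤ ex p n (fun x => |f x|) := by
  refine (Finset.abs_sum_le_sum_abs _ _).trans (Finset.sum_le_sum fun x _ => ?_)
  rw [abs_mul, abs_of_nonneg (wt_nonneg hp0 hp1 x)]

lemma ex_succ (g : (Fin (n + 1) → Bool) → ℝ) :
    ex p (n + 1) g
      = ex p n (fun x => p * g (Fin.cons true x) + (1 - p) * g (Fin.cons false x)) := by
  have hwt (b : Bool) (x : Fin n → Bool) :
      wt p (n + 1) (Fin.cons b x) = (if b then p else 1 - p) * wt p n x := by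
    simp [wt, Fin.prod_univ_succ]
  unfold ex
  rw [← (Fin.consEquiv fun _ => Bool).sum_comp, Fintype.sum_prod_type, Fintype.sum_bool,
    ← Finset.sum_add_distrib]
  refine Finset.sum_congr rfl fun x _ => ?_
  change wt p (n + 1) (Fin.cons true x) * g (Fin.cons true x)
    + wt p (n + 1) (Fin.cons false x) * g (Fin.cons false x) = _
  simp only [hwt, if_true, Bool.false_eq_true, if_false]
  ring

end Expectation

lemma var_eq_one_sub_sq {p : ℝ} {n : ℕ} {f : (Fin n → Bool) → ℝ}
    (hf : ∀ x, f x = 1 ∨ f x = -1) : var p n f = 1 - ex p n f ^ 2 := by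
  have hsq : (fun x => f x ^ 2) = fun _ => 1 :=
    funext fun x => by rcases hf x with h | h <;> simp [h]
  rw [var, hsq, ex_const]

lemma ex_abs_sub_ex_eq_var {p : ℝ} (hp0 : 0 ≤ p) (hp1 : p ≤ 1) {n : ℕ}
    {f : (Fin n → Bool) → ℝ} (hf : ∀ x, f x = 1 ∨ f x = -1) :
    ex p n (fun x => |f x - ex p n f|) = var p n f := by
  set μ := ex p n f
  have hμ : |μ| ≤ 1 := by
    have habs : (fun x => |f x|) = fun _ => 1 :=
      funext fun x => by rcases hf x with h | h <;> simp [h]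
    simpa [habs, ex_const] using abs_ex_le hp0 hp1 f
  have hlin : (fun x => |f x - μ|) = fun x => -μ * f x + 1 := funext fun x => by
    rcases hf x with h | h <;> rw [h] <;> [rw [abs_of_nonneg]; rw [abs_of_nonpos]] <;>
      linarith [abs_le.mp hμ]
  rw [var_eq_one_sub_sq hf, hlin, ex_affine]
  ring

lemma sqrt_sum_sq_smul_add_le {ι : Type*} [Fintype ι] {p q : ℝ} (hp : 0 ≤ p) (hq : 0 ≤ q)
    (u w : ι → ℝ) :
    √(∑ i, (p * u i + q * w i) ^ 2) ≤ p * √(∑ i, u i ^ 2) + q * √(∑ i, w i ^ 2) := by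
  have hnorm (v : ι → ℝ) : √(∑ i, v i ^ 2) = ‖WithLp.toLp 2 v‖ := by
    simp [EuclideanSpace.norm_eq]
  rw [hnorm, hnorm, hnorm]
  calc ‖WithLp.toLp 2 (fun i => p * u i + q * w i)‖
      = ‖p • WithLp.toLp 2 u + q • WithLp.toLp 2 w‖ := rfl
    _ ≤ ‖p • WithLp.toLp 2 u‖ + ‖q • WithLp.toLp 2 w‖ := norm_add_le _ _
    _ = _ := by rw [norm_smul, norm_smul, Real.norm_of_nonneg hp, Real.norm_of_nonneg hq]

noncomputable def bobkovIntegrand (c : ℝ) {n : ℕ} (g : (Fin n → Bool) → ℝ) (x : Fin n → Bool) :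
    ℝ :=
  √((c * g x * (1 - g x)) ^ 2 + ∑ j, Dj j g x ^ 2)

lemma two_point_bobkov {p c a b : ℝ} (hp0 : 0 ≤ p) (hp1 : p ≤ 1) (hc : 0 ≤ c)
    (hcp : c ^ 2 * (p * (1 - p)) ≤ 1 / 3) (ha0 : 0 ≤ a) (ha1 : a ≤ 1) (hb0 : 0 ≤ b)
    (hb1 : b ≤ 1) :
    (c * (p * a + (1 - p) * b) * (1 - (p * a + (1 - p) * b))) ^ 2
      ≤ (p * (c * a * (1 - a)) + (1 - p) * (c * b * (1 - b))) ^ 2 + ((a - b) / 2) ^ 2 := by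
  set q := 1 - p
  set S := p * (c * a * (1 - a)) + q * (c * b * (1 - b))
  set d := a - b
  have hq0 : 0 ≤ q := by linarith
  have hpq4 : p * q ≤ 1 / 4 := by nlinarith [sq_nonneg (p - q)]
  -- `J(t) = c t (1 - t)` is quadratic, so its mean-value defect is exactly `c p q d²`
  have hsplit : c * (p * a + q * b) * (1 - (p * a + q * b)) = S + c * (p * q) * d ^ 2 := by
    simp only [S, d, q]; ring
  have hS0 : 0 ≤ S := by positivity
  have hSc : S ≤ c / 4 := by
    have hJa : c * a * (1 - a) ≤ c / 4 := by nlinarith [sq_nonneg (a - 1 / 2)]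
    have hJb : c * b * (1 - b) ≤ c / 4 := by nlinarith [sq_nonneg (b - 1 / 2)]
    nlinarith [mul_le_mul_of_nonneg_left hJa hp0, mul_le_mul_of_nonneg_left hJb hq0]
  have hd : d ^ 2 ≤ 1 := by nlinarith
  rw [hsplit]
  nlinarith [mul_le_mul_of_nonneg_right hSc (by positivity : 0 ≤ 2 * (c * (p * q) * d ^ 2)),
    mul_le_mul_of_nonneg_right hcp (by positivity : 0 ≤ p * q * (d ^ 2 * d ^ 2)),
    mul_le_mul_of_nonneg_right hpq4 (by positivity : 0 ≤ d ^ 2 * d ^ 2),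
    mul_le_mul_of_nonneg_right hd (sq_nonneg d),
    mul_le_mul_of_nonneg_right hcp (sq_nonneg d)]

section Cons

variable {n : ℕ}

lemma flipC_succ_cons (b : Bool) (x : Fin n → Bool) (j : Fin n) :
    flipC j.succ (Fin.cons b x) = Fin.cons b (flipC j x) := by
  simp only [flipC, Fin.cons_succ, Fin.cons_update]

lemma sum_Dj_sq_cons (g : (Fin (n + 1) → Bool) → ℝ) (b : Bool) (x : Fin n → Bool) :
    ∑ j, Dj j g (Fin.cons b x) ^ 2
      = ((g (Fin.cons true x) - g (Fin.cons false x)) / 2) ^ 2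
        + ∑ j, Dj j (fun y => g (Fin.cons b y)) x ^ 2 := by
  rw [Fin.sum_univ_succ]
  congr 1
  · cases b
    · simp only [Dj, flipC, Fin.cons_zero, Fin.update_cons_zero, Bool.not_false]; ring
    · simp only [Dj, flipC, Fin.cons_zero, Fin.update_cons_zero, Bool.not_true]
  · simp only [Dj, flipC_succ_cons]

lemma Dj_mul_add_mul (α β : ℝ) (g h : (Fin n → Bool) → ℝ) (j : Fin n) (x : Fin n → Bool) :
    Dj j (fun y => α * g y + β * h y) x = α * Dj j g x + β * Dj j h x := by
  simp only [Dj]; ring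

end Cons

lemma bobkovIntegrand_mean_cons_le {p c : ℝ} (hp0 : 0 ≤ p) (hp1 : p ≤ 1) (hc : 0 ≤ c)
    (hcp : c ^ 2 * (p * (1 - p)) ≤ 1 / 3) {n : ℕ} {g : (Fin (n + 1) → Bool) → ℝ}
    (hg : ∀ x, 0 ≤ g x ∧ g x ≤ 1) (x : Fin n → Bool) :
    bobkovIntegrand c (fun y => p * g (Fin.cons true y) + (1 - p) * g (Fin.cons false y)) x
      ≤ p * bobkovIntegrand c g (Fin.cons true x)
        + (1 - p) * bobkovIntegrand c g (Fin.cons false x) := by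
  -- only squares enter, so the first-coordinate derivative may carry the same sign at both points
  let V (s : Bool) : Fin 2 ⊕ Fin n → ℝ :=
    Sum.elim
      ![c * g (Fin.cons s x) * (1 - g (Fin.cons s x)),
        (g (Fin.cons true x) - g (Fin.cons false x)) / 2]
      fun j => Dj j (fun y => g (Fin.cons s y)) x
  have hV (s : Bool) : bobkovIntegrand c g (Fin.cons s x) = √(∑ i, V s i ^ 2) := by
    simp only [bobkovIntegrand, sum_Dj_sq_cons, V, Fintype.sum_sum_type, Fin.sum_univ_two,
      Sum.elim_inl, Sum.elim_inr, Matrix.cons_val_zero, Matrix.cons_val_one, add_assoc]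
  rw [hV, hV]
  refine le_trans (Real.sqrt_le_sqrt ?_) (sqrt_sum_sq_smul_add_le hp0 (by linarith) _ _)
  have h2 := two_point_bobkov hp0 hp1 hc hcp (hg (Fin.cons true x)).1
    (hg (Fin.cons true x)).2 (hg (Fin.cons false x)).1 (hg (Fin.cons false x)).2
  simp only [V, Fintype.sum_sum_type, Fin.sum_univ_two, Sum.elim_inl, Sum.elim_inr,
    Matrix.cons_val_zero, Matrix.cons_val_one, Dj_mul_add_mul]
  nlinarith [h2]

lemma ex_zero {p : ℝ} (F : (Fin 0 → Bool) → ℝ) (x : Fin 0 → Bool) : ex p 0 F = F x := by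
  simp only [ex, wt, Finset.univ_unique, Finset.sum_singleton, Finset.univ_eq_empty,
    Finset.prod_empty, one_mul]
  exact congrArg F (Subsingleton.elim _ _)

theorem bobkov_ineq {p c : ℝ} (hp0 : 0 ≤ p) (hp1 : p ≤ 1) (hc : 0 ≤ c)
    (hcp : c ^ 2 * (p * (1 - p)) ≤ 1 / 3) {n : ℕ} {g : (Fin n → Bool) → ℝ}
    (hg : ∀ x, 0 ≤ g x ∧ g x ≤ 1) :
    c * ex p n g * (1 - ex p n g) ≤ ex p n (bobkovIntegrand c g) := by
  induction n with
  | zero =>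
    rw [ex_zero _ default, ex_zero _ default, bobkovIntegrand, Fin.sum_univ_zero, add_zero,
      Real.sqrt_sq_eq_abs]
    exact le_abs_self _
  | succ n ih =>
    set gbar := fun y => p * g (Fin.cons true y) + (1 - p) * g (Fin.cons false y)
    have hgbar (x : Fin n → Bool) : 0 ≤ gbar x ∧ gbar x ≤ 1 := by
      obtain ⟨hT0, hT1⟩ := hg (Fin.cons true x)
      obtain ⟨hF0, hF1⟩ := hg (Fin.cons false x)
      constructor <;> simp only [gbar] <;> nlinarith
    calc c * ex p (n + 1) g * (1 - ex p (n + 1) g)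
        = c * ex p n gbar * (1 - ex p n gbar) := by rw [ex_succ]
      _ ≤ ex p n (bobkovIntegrand c gbar) := ih hgbar
      _ ≤ ex p n (fun x => p * bobkovIntegrand c g (Fin.cons true x)
            + (1 - p) * bobkovIntegrand c g (Fin.cons false x)) :=
          ex_mono hp0 hp1 (bobkovIntegrand_mean_cons_le hp0 hp1 hc hcp hg)
      _ = ex p (n + 1) (bobkovIntegrand c g) := (ex_succ _).symm

lemma sq_inv_max_mul_sqrt_pi_mul_le (p : ℝ) :
    (max p (1 - p) * √π)⁻¹ ^ 2 * (p * (1 - p)) ≤ 1 / 3 := by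
  have hM : 1 / 2 ≤ max p (1 - p) := by
    rcases le_total p (1 / 2) with h | h
    · exact le_max_of_le_right (by linarith)
    · exact le_max_of_le_left h
  rw [inv_pow, mul_pow, Real.sq_sqrt Real.pi_pos.le, inv_mul_le_iff₀ (by positivity)]
  calc p * (1 - p) ≤ max p (1 - p) ^ 2 := by nlinarith [sq_nonneg (2 * p - 1)]
    _ ≤ max p (1 - p) ^ 2 * π * (1 / 3) := by
      nlinarith [Real.pi_gt_three, sq_nonneg (max p (1 - p))]

lemma mul_var_le_two_mul_ex_gradNorm {p c : ℝ} (hp0 : 0 ≤ p) (hp1 : p ≤ 1) (hc : 0 ≤ c)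
    (hcp : c ^ 2 * (p * (1 - p)) ≤ 1 / 3) {n : ℕ} {f : (Fin n → Bool) → ℝ}
    (hf : ∀ x, f x = 1 ∨ f x = -1) :
    c * var p n f ≤ 2 * ex p n (gradNorm f) := by
  set g : (Fin n → Bool) → ℝ := fun x => (f x + 1) / 2
  have hg (x) : 0 ≤ g x ∧ g x ≤ 1 := by rcases hf x with h | h <;> simp [g, h]
  have hBg : bobkovIntegrand c g = fun x => 1 / 2 * gradNorm f x := funext fun x => by
    have hJ : (c * g x * (1 - g x)) ^ 2 = 0 := by rcases hf x with h | h <;> simp [g, h]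
    have hD (j : Fin n) : Dj j g x ^ 2 = (1 / 2) ^ 2 * Dj j f x ^ 2 := by
      simp only [Dj, g]; ring
    rw [bobkovIntegrand, hJ, Finset.sum_congr rfl fun j _ => hD j, ← Finset.mul_sum,
      zero_add, Real.sqrt_mul (by positivity), Real.sqrt_sq (by norm_num), gradNorm]
  have hexg : ex p n g = 1 / 2 * ex p n f + 1 / 2 := by
    rw [← ex_affine]; congr 1; funext x; simp only [g]; ring
  have hgrad : ex p n (fun x => 1 / 2 * gradNorm f x) = 1 / 2 * ex p n (gradNorm f) := by
    simpa using ex_affine (p := p) (1 / 2) 0 (gradNorm f)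
  have hB := bobkov_ineq hp0 hp1 hc hcp hg
  rw [hBg, hgrad, hexg] at hB
  rw [var_eq_one_sub_sq hf]
  linarith

theorem stmt11 (p : ℝ) (hp : p ∈ Set.Ioo (0:ℝ) 1) (n : ℕ)
    (f : (Fin n → Bool) → ℝ) (hf : ∀ x, f x = 1 ∨ f x = -1) :
    ex p n (fun x => |f x - ex p n f|) = var p n f
    ∧ var p n f ≤ 2 * max p (1 - p) * Real.sqrt Real.pi * ex p n (gradNorm f) := by
  have hp0 : 0 ≤ p := hp.1.le
  have hp1 : p ≤ 1 := hp.2.le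
  refine ⟨ex_abs_sub_ex_eq_var hp0 hp1 hf, ?_⟩
  set C := max p (1 - p) * √π
  have hC : 0 < C := by
    have : 0 < max p (1 - p) := lt_max_of_lt_left hp.1
    positivity
  have key := mul_var_le_two_mul_ex_gradNorm hp0 hp1 (inv_nonneg.mpr hC.le)
    (sq_inv_max_mul_sqrt_pi_mul_le p) hf
  calc var p n f = C * (C⁻¹ * var p n f) := by field_simp
    _ ≤ C * (2 * ex p n (gradNorm f)) := by gcongr
    _ = 2 * max p (1 - p) * √π * ex p n (gradNorm f) := by simp only [C]; ring
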